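/- arXiv:2507.05909 — 8 statements merged into one kernel-verified Lean document; each statement's English description precedes it below -/
import Mathlib

section
/- Let K be a field of characteristic zero and let g be a finite-dimensional Lie algebra over K. Then for every Lie algebra h over K there exists a universal pair for (g, h): a commutative K-algebra A together with a Lie algebra morphism η : h → A ⊗ g such that for every commutative K-algebra C and every Lie algebra morphism f : h → C ⊗ g there exists a unique K-algebra homomorphism Φ : A → C with f = (Φ ⊗ id_g) ∘ η. (Equivalently, the functor g ⊗ − : ComAlg_K → LieAlg_K admits a left adjoint.) -/
/-!
With bases `b` of `g` and `c` of `h`, a `K`-linear map `h → C ⊗ g` is its matrix of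
coordinates, i.e. a `K`-algebra map to `C` from the polynomial ring `R` on the matrix entries;
the generic such map `η₀ : h → R ⊗ g` sends `c j` to `∑ i, X (j, i) ⊗ b i`, a finite sum because
`g` is finite-dimensional. Since base change along an algebra map preserves brackets and
coordinates, the specialisation of `η₀` along `φ : R → C` is a Lie morphism exactly when `φ`
kills the coordinates of all `η₀ ⁅x, y⁆ - ⁅η₀ x, η₀ y⁆`. Hence `A` is `R` modulo the ideal they
generate.
-/

open TensorProduct

universe u

/-- The base-change Lie bracket on `A ⊗[K] g` is `K`-bilinear, so `A ⊗[K] g` is a Lie algebra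
over `K` (and not merely over `A`). -/
noncomputable instance baseChangeLieAlgebra {K : Type u} [Field K]
    {A : Type u} [CommRing A] [Algebra K A]
    {L : Type u} [LieRing L] [LieAlgebra K L] : LieAlgebra K (A ⊗[K] L) :=
  { (inferInstance : Module K (A ⊗[K] L)) with
    lie_smul := fun t x y => by
      rw [← algebraMap_smul A t y, lie_smul, algebraMap_smul] }

/-- `(A, η)` is a universal pair for `(g, h)`: for every commutative `K`-algebra `C` and
every Lie algebra morphism `f : h → C ⊗ g` there is a unique `K`-algebra homomorphism
`Φ : A → C` with `f = (Φ ⊗ id_g) ∘ η`. -/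
def IsUniversalLiePair (K : Type u) [Field K]
    (g : Type u) [LieRing g] [LieAlgebra K g]
    (h : Type u) [LieRing h] [LieAlgebra K h]
    (A : Type u) [CommRing A] [Algebra K A]
    (η : h →ₗ⁅K⁆ A ⊗[K] g) : Prop :=
  ∀ (C : Type u) [CommRing C] [Algebra K C], ∀ f : h →ₗ⁅K⁆ C ⊗[K] g,
    ∃! Φ : A →ₐ[K] C, ∀ x : h, f x = LinearMap.rTensor g Φ.toLinearMap (η x)

/-- A universal pair for `(g, h)`: a commutative `K`-algebra together with a Lie algebra
morphism `η : h → A ⊗ g` satisfying the universal property. -/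
structure UniversalLiePair (K : Type u) [Field K]
    (g : Type u) [LieRing g] [LieAlgebra K g]
    (h : Type u) [LieRing h] [LieAlgebra K h] : Type (u + 1) where
  A : Type u
  [commRingA : CommRing A]
  [algebraA : Algebra K A]
  η : h →ₗ⁅K⁆ A ⊗[K] g
  universal : IsUniversalLiePair K g h A η

open Module MvPolynomial

section BaseChange

variable {K : Type*} [CommRing K] {A C : Type*} [CommRing A] [Algebra K A] [CommRing C]
  [Algebra K C]

theorem AlgHom.rTensor_lie {g : Type*} [LieRing g] [LieAlgebra K g] (φ : A →ₐ[K] C)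
    (x y : A ⊗[K] g) :
    LinearMap.rTensor g φ.toLinearMap ⁅x, y⁆ =
      ⁅LinearMap.rTensor g φ.toLinearMap x, LinearMap.rTensor g φ.toLinearMap y⁆ :=
  (LieAlgebra.ExtendScalars.map φ (LieHom.id : g →ₗ⁅K⁆ g)).map_lie x y

variable {ι M : Type*} [AddCommGroup M] [Module K M]

theorem Module.Basis.baseChange_repr_rTensor (b : Basis ι K M) (φ : A →ₐ[K] C)
    (z : A ⊗[K] M) (i : ι) :
    (b.baseChange C).repr (LinearMap.rTensor M φ.toLinearMap z) i =
      φ ((b.baseChange A).repr z i) := by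
  induction z using TensorProduct.induction_on with
  | zero => simp
  | tmul a m => simp
  | add z z' hz hz' => simp [hz, hz']

theorem Module.Basis.sum_baseChange_repr_tmul [Fintype ι] (b : Basis ι K M) (z : C ⊗[K] M) :
    ∑ i, (b.baseChange C).repr z i ⊗ₜ[K] b i = z := by
  conv_rhs => rw [← (b.baseChange C).sum_repr z]
  simp [smul_tmul']

end BaseChange

section GenericLinearMap

variable {K : Type*} [CommRing K] {M N : Type*} [AddCommGroup M] [Module K M]
  [AddCommGroup N] [Module K N] {ι κ : Type*} [Fintype ι]

noncomputable def Module.Basis.genericLinearMap (c : Basis κ K N) (b : Basis ι K M) :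
    N →ₗ[K] MvPolynomial (κ × ι) K ⊗[K] M :=
  c.constr K fun j => ∑ i, X (j, i) ⊗ₜ b i

theorem Module.Basis.genericLinearMap_apply_basis (c : Basis κ K N) (b : Basis ι K M) (j : κ) :
    c.genericLinearMap b (c j) = ∑ i, X (j, i) ⊗ₜ b i :=
  c.constr_basis K _ j

theorem Module.Basis.baseChange_repr_genericLinearMap (c : Basis κ K N) (b : Basis ι K M)
    (j : κ) (i : ι) : (b.baseChange _).repr (c.genericLinearMap b (c j)) i = X (j, i) := by
  classical
  simp [genericLinearMap_apply_basis, Finsupp.single_apply]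

theorem Module.Basis.existsUnique_rTensor_comp_genericLinearMap (c : Basis κ K N)
    (b : Basis ι K M) {C : Type*} [CommRing C] [Algebra K C] (f : N →ₗ[K] C ⊗[K] M) :
    ∃! φ : MvPolynomial (κ × ι) K →ₐ[K] C,
      LinearMap.rTensor M φ.toLinearMap ∘ₗ c.genericLinearMap b = f := by
  classical
  have coord_X (φ : MvPolynomial (κ × ι) K →ₐ[K] C) (j : κ) (i : ι) :
      φ (X (j, i)) = (b.baseChange C).repr
        ((LinearMap.rTensor M φ.toLinearMap ∘ₗ c.genericLinearMap b) (c j)) i := by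
    rw [LinearMap.comp_apply, b.baseChange_repr_rTensor, c.baseChange_repr_genericLinearMap]
  refine ⟨aeval fun p => (b.baseChange C).repr (f (c p.1)) p.2, c.ext fun j => ?_,
    fun φ hφ => algHom_ext fun ⟨j, i⟩ => by rw [coord_X, hφ, aeval_X]⟩
  simp [genericLinearMap_apply_basis, b.sum_baseChange_repr_tmul]

end GenericLinearMap

section LieRelationIdeal

variable {K : Type*} [CommRing K] {g h : Type*} [LieRing g] [LieAlgebra K g] [LieRing h]
  [LieAlgebra K h] {ι : Type*} {R : Type*} [CommRing R] [Algebra K R]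

def lieRelationIdeal (b : Basis ι K g) (η₀ : h →ₗ[K] R ⊗[K] g) : Ideal R :=
  Ideal.span (⋃ (x : h) (y : h), Set.range ((b.baseChange R).repr (η₀ ⁅x, y⁆ - ⁅η₀ x, η₀ y⁆)))

theorem lieRelationIdeal_le_ker_iff (b : Basis ι K g) (η₀ : h →ₗ[K] R ⊗[K] g) {C : Type*}
    [CommRing C] [Algebra K C] (φ : R →ₐ[K] C) :
    lieRelationIdeal b η₀ ≤ RingHom.ker φ ↔ ∀ x y,
      LinearMap.rTensor g φ.toLinearMap (η₀ ⁅x, y⁆) =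
        ⁅LinearMap.rTensor g φ.toLinearMap (η₀ x), LinearMap.rTensor g φ.toLinearMap (η₀ y)⁆ := by
  simp only [lieRelationIdeal, Ideal.span_le, Set.iUnion_subset_iff, Set.range_subset_iff,
    SetLike.mem_coe, RingHom.mem_ker]
  refine forall₂_congr fun x y => ?_
  rw [← sub_eq_zero, ← φ.rTensor_lie, ← map_sub, ← (b.baseChange C).repr.map_eq_zero_iff,
    Finsupp.ext_iff]
  simp only [b.baseChange_repr_rTensor, Finsupp.coe_zero, Pi.zero_apply]

noncomputable def lieRelationIdeal.lieHom (b : Basis ι K g) (η₀ : h →ₗ[K] R ⊗[K] g) :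
    h →ₗ⁅K⁆ (R ⧸ lieRelationIdeal b η₀) ⊗[K] g :=
  { LinearMap.rTensor g (Ideal.Quotient.mkₐ K (lieRelationIdeal b η₀)).toLinearMap ∘ₗ η₀ with
    map_lie' := fun {x y} =>
      (lieRelationIdeal_le_ker_iff b η₀ _).1 (Ideal.Quotient.mkₐ_ker K _).ge x y }

end LieRelationIdeal

theorem isUniversalLiePair_lieRelationIdeal {K : Type u} [Field K] {g h R : Type u} [LieRing g]
    [LieAlgebra K g] [LieRing h] [LieAlgebra K h] [CommRing R] [Algebra K R] {ι : Type*}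
    (b : Basis ι K g) (η₀ : h →ₗ[K] R ⊗[K] g)
    (huniv : ∀ (C : Type u) [CommRing C] [Algebra K C] (f : h →ₗ[K] C ⊗[K] g),
      ∃! φ : R →ₐ[K] C, LinearMap.rTensor g φ.toLinearMap ∘ₗ η₀ = f) :
    IsUniversalLiePair K g h (R ⧸ lieRelationIdeal b η₀) (lieRelationIdeal.lieHom b η₀) := by
  intro C _ _ f
  set I := lieRelationIdeal b η₀
  have rTensor_comp_mk (Φ : R ⧸ I →ₐ[K] C) :
      LinearMap.rTensor g (Φ.comp (Ideal.Quotient.mkₐ K I)).toLinearMap ∘ₗ η₀ =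
        LinearMap.rTensor g Φ.toLinearMap ∘ₗ (lieRelationIdeal.lieHom b η₀).toLinearMap := by
    rw [AlgHom.comp_toLinearMap, LinearMap.rTensor_comp, LinearMap.comp_assoc]
    rfl
  obtain ⟨φ, hφ, hφ_unique⟩ := huniv C f
  have hker : I ≤ RingHom.ker φ :=
    (lieRelationIdeal_le_ker_iff b η₀ φ).2 fun x y => by
      simp only [← LinearMap.comp_apply, hφ, LieHom.coe_toLinearMap, LieHom.map_lie]
  let Φ := Ideal.Quotient.liftₐ I φ hker
  have hΦ : Φ.comp (Ideal.Quotient.mkₐ K I) = φ := Ideal.Quotient.liftₐ_comp I φ hker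
  refine ⟨Φ, fun x => ?_, fun Ψ hΨ => Ideal.Quotient.algHom_ext K ?_⟩
  · have hf := rTensor_comp_mk Φ
    rw [hΦ, hφ] at hf
    exact LinearMap.congr_fun hf x
  · refine (hφ_unique _ ?_).trans hΦ.symm
    change LinearMap.rTensor g _ ∘ₗ η₀ = _
    rw [rTensor_comp_mk]
    exact LinearMap.ext fun x => (hΨ x).symm

theorem exists_universalLiePair_of_finiteDimensional_general
    (K : Type u) [Field K]
    (g : Type u) [LieRing g] [LieAlgebra K g] [FiniteDimensional K g]
    (h : Type u) [LieRing h] [LieAlgebra K h] :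
    Nonempty (UniversalLiePair K g h) :=
  let b := Module.finBasis K g
  let η₀ := (Basis.ofVectorSpace K h).genericLinearMap b
  ⟨⟨_, lieRelationIdeal.lieHom b η₀, isUniversalLiePair_lieRelationIdeal b η₀ fun _ _ _ =>
    (Basis.ofVectorSpace K h).existsUnique_rTensor_comp_genericLinearMap b⟩⟩

/-- If `g` is a finite-dimensional Lie algebra over a field `K` of characteristic zero, then
for every Lie algebra `h` over `K` there exists a universal pair for `(g, h)`. -/
theorem exists_universalLiePair_of_finiteDimensional
    (K : Type u) [Field K] [CharZero K]
    (g : Type u) [LieRing g] [LieAlgebra K g] [FiniteDimensional K g]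
    (h : Type u) [LieRing h] [LieAlgebra K h] :
    Nonempty (UniversalLiePair K g h) :=
  exists_universalLiePair_of_finiteDimensional_general K g h
end

section
/- Let K be a field of characteristic zero and let g be a Lie algebra over K. If for every Lie algebra h over K there exists a universal pair for (g, h) (equivalently, if the functor g ⊗ − : ComAlg_K → LieAlg_K admits a left adjoint), then g is finite-dimensional over K. -/
/-!
Take `h = K` with its abelian bracket. Every `v : g` gives a Lie algebra morphism
`K → K ⊗ g`, `t ↦ t ⊗ v`, so by universality `v` is the image of the single element `η 1` of
`A ⊗ g` under `lid ∘ (Φ ⊗ id_g)` for some `Φ : A → K`. Writing `η 1 = ∑ aᵢ ⊗ vᵢ`, every such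
image lies in the span of the finitely many `vᵢ`, which is therefore all of `g`.
-/

open TensorProduct

universe u

namespace TensorProduct

variable {R A M : Type*} [CommRing R] [AddCommGroup A] [Module R A] [AddCommGroup M] [Module R M]

theorem exists_fg_forall_lid_rTensor_mem (x : A ⊗[R] M) :
    ∃ N : Submodule R M, N.FG ∧ ∀ φ : A →ₗ[R] R, TensorProduct.lid R M (φ.rTensor M x) ∈ N := by
  classical
  obtain ⟨S, rfl⟩ := exists_finset x
  refine ⟨Submodule.span R (S.image Prod.snd), Submodule.fg_span (Finset.finite_toSet _),
    fun φ => ?_⟩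
  simp only [map_sum, LinearMap.rTensor_tmul, lid_tmul]
  exact Submodule.sum_mem _ fun p hp =>
    Submodule.smul_mem _ _ (Submodule.subset_span (Finset.mem_image_of_mem _ hp))

end TensorProduct

section

attribute [local instance] LieRing.ofAssociativeRing

variable {R L : Type*} [CommRing R] [LieRing L] [LieAlgebra R L]

def LieHom.toSpanSingleton (w : L) : R →ₗ⁅R⁆ L where
  toLinearMap := LinearMap.toSpanSingleton R L w
  map_lie' := by simp [Ring.lie_def, mul_comm]

@[simp]
theorem LieHom.toSpanSingleton_apply (w : L) (t : R) : LieHom.toSpanSingleton w t = t • w :=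
  rfl

theorem IsUniversalLiePair.exists_lid_rTensor_eq {K : Type u} [Field K]
    {g : Type u} [LieRing g] [LieAlgebra K g] {A : Type u} [CommRing A] [Algebra K A]
    {η : K →ₗ⁅K⁆ A ⊗[K] g} (hη : IsUniversalLiePair K g K A η) (v : g) :
    ∃ Φ : A →ₐ[K] K, TensorProduct.lid K g (Φ.toLinearMap.rTensor g (η 1)) = v := by
  obtain ⟨Φ, hΦ, -⟩ := hη K (LieHom.toSpanSingleton ((1 : K) ⊗ₜ v))
  exact ⟨Φ, by rw [← hΦ 1, LieHom.toSpanSingleton_apply, one_smul, lid_tmul, one_smul]⟩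

end

theorem finiteDimensional_of_forall_exists_universalLiePair_general
    (K : Type u) [Field K]
    (g : Type u) [LieRing g] [LieAlgebra K g]
    (huniv : ∀ (h : Type u) [LieRing h] [LieAlgebra K h], Nonempty (UniversalLiePair K g h)) :
    FiniteDimensional K g := by
  let : LieRing K := LieRing.ofAssociativeRing
  obtain ⟨P⟩ := huniv K
  let := P.commRingA
  let := P.algebraA
  obtain ⟨N, hN, hmem⟩ := exists_fg_forall_lid_rTensor_mem (P.η 1)
  have hN_top : N = ⊤ := eq_top_iff.mpr fun v _ => by
    obtain ⟨Φ, hΦ⟩ := P.universal.exists_lid_rTensor_eq v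
    exact hΦ ▸ hmem Φ.toLinearMap
  exact Module.finite_def.mpr (hN_top ▸ hN)

/-- If every Lie algebra `h` over `K` admits a universal pair for `(g, h)`, then `g` is
finite-dimensional over `K`. -/
theorem finiteDimensional_of_forall_exists_universalLiePair
    (K : Type u) [Field K] [CharZero K]
    (g : Type u) [LieRing g] [LieAlgebra K g]
    (huniv : ∀ (h : Type u) [LieRing h] [LieAlgebra K h], Nonempty (UniversalLiePair K g h)) :
    FiniteDimensional K g :=
  finiteDimensional_of_forall_exists_universalLiePair_general K g huniv
end

section
/- With the explicit presentation below, the linear map η : g → C(g) ⊗ g defined on the basis by η(a_i) = Σ_{s=1}^n x_{s i} ⊗ a_s is a morphism of Lie algebras, where C(g) ⊗ g carries the base-change Lie bracket. -/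
/-!
Both `η ⁅x, y⁆` and `⁅η x, η y⁆` are bilinear in `(x, y)`, so it suffices to compare them on
pairs of basis vectors. There the coefficients of `a_a` are `Σ_u α^u_{i j} x_{a u}` and
`Σ_{s,t} α^a_{s t} x_{s i} x_{t j}`, which agree in `C(g)` because their difference is the
generator `P_{(a,i,j)}` of `J`. The computation only uses that `(x_{s i})` is a zero of the
polynomials `P_{(a,i,j)}`, so it holds for such a point in any commutative algebra.
-/

open TensorProduct MvPolynomial

universe u

theorem LinearMap.map_lie_of_basis {R L L' ι : Type*} [CommRing R] [LieRing L] [LieAlgebra R L]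
    [LieRing L'] [LieAlgebra R L'] (b : Module.Basis ι R L) (f : L →ₗ[R] L')
    (h : ∀ i j, f ⁅b i, b j⁆ = ⁅f (b i), f (b j)⁆) (x y : L) :
    f ⁅x, y⁆ = ⁅f x, f y⁆ := by
  have hbilin := LinearMap.ext_basis
    (B := (LieModule.toEnd R L L : L →ₗ[R] Module.End R L).compr₂ f)
    (B' := (LieModule.toEnd R L' L' : L' →ₗ[R] Module.End R L').compl₁₂ f f) b b
    (by simpa using h)
  simpa using DFunLike.congr_fun (DFunLike.congr_fun hbilin x) y

namespace LieAlgebra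

variable {R A L ι : Type*} [CommRing R] [CommRing A] [Algebra R A] [LieRing L] [LieAlgebra R L]
  [Fintype ι]

/-- `ξ` is an `A`-valued zero of the universal polynomials `P_{(a,i,j)}`. -/
def IsStructurePoint (α : ι → ι → ι → R) (ξ : ι × ι → A) : Prop :=
  ∀ a i j, ∑ u, α u i j • ξ (a, u) = ∑ s, ∑ t, α a s t • (ξ (s, i) * ξ (t, j))

noncomputable def structureIdeal (α : ι → ι → ι → R) : Ideal (MvPolynomial (ι × ι) R) :=
  Ideal.span (Set.range fun p : ι × ι × ι =>
    (∑ u, C (α u p.2.1 p.2.2) * X (p.1, u)) -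
      ∑ s, ∑ t, C (α p.1 s t) * X (s, p.2.1) * X (t, p.2.2))

theorem isStructurePoint_mk_X (α : ι → ι → ι → R) :
    IsStructurePoint α fun p => Ideal.Quotient.mk (structureIdeal α) (X p) := by
  intro a i j
  simp only [Algebra.smul_def, ← Ideal.Quotient.mk_algebraMap, algebraMap_eq, ← map_mul,
    ← map_sum]
  rw [Ideal.Quotient.eq]
  exact Ideal.subset_span ⟨(a, i, j), by simp only [mul_assoc]⟩

noncomputable def structureMap (b : Module.Basis ι R L) (ξ : ι × ι → A) : L →ₗ[R] A ⊗[R] L :=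
  b.constr R fun i => ∑ s, ξ (s, i) ⊗ₜ[R] b s

theorem structureMap_basis (b : Module.Basis ι R L) (ξ : ι × ι → A) (i : ι) :
    structureMap b ξ (b i) = ∑ s, ξ (s, i) ⊗ₜ[R] b s :=
  b.constr_basis R _ i

variable {b : Module.Basis ι R L} {α : ι → ι → ι → R} {ξ : ι × ι → A}

theorem structureMap_lie_basis_eq (hα : ∀ i j, ⁅b i, b j⁆ = ∑ s, α s i j • b s) (i j : ι) :
    structureMap b ξ ⁅b i, b j⁆ = ∑ a, (∑ u, α u i j • ξ (a, u)) ⊗ₜ[R] b a := by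
  simp only [hα, map_sum, map_smul, structureMap_basis, Finset.smul_sum, smul_tmul', sum_tmul]
  exact Finset.sum_comm

theorem lie_structureMap_basis_eq (hα : ∀ i j, ⁅b i, b j⁆ = ∑ s, α s i j • b s) (i j : ι) :
    ⁅structureMap b ξ (b i), structureMap b ξ (b j)⁆ =
      ∑ a, (∑ s, ∑ t, α a s t • (ξ (s, i) * ξ (t, j))) ⊗ₜ[R] b a := by
  simp only [structureMap_basis, sum_lie_sum, ExtendScalars.bracket_tmul, hα, tmul_sum,
    tmul_smul, smul_tmul', sum_tmul]
  exact Finset.sum_comm_cycle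

theorem structureMap_lie (hα : ∀ i j, ⁅b i, b j⁆ = ∑ s, α s i j • b s)
    (hξ : IsStructurePoint α ξ) (x y : L) :
    structureMap b ξ ⁅x, y⁆ = ⁅structureMap b ξ x, structureMap b ξ y⁆ := by
  refine LinearMap.map_lie_of_basis b _ (fun i j => ?_) x y
  rw [structureMap_lie_basis_eq hα, lie_structureMap_basis_eq hα]
  exact Finset.sum_congr rfl fun a _ => by rw [hξ a i j]

end LieAlgebra

theorem eta_bracket_preserving_general
    (K : Type u) [Field K]
    (g : Type u) [LieRing g] [LieAlgebra K g]
    (n : ℕ) (b : Module.Basis (Fin n) K g)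
    (α : Fin n → Fin n → Fin n → K)
    (hα : ∀ i j : Fin n, ⁅b i, b j⁆ = ∑ s : Fin n, α s i j • b s)
    (J : Ideal (MvPolynomial (Fin n × Fin n) K))
    (hJ : J = Ideal.span (Set.range fun p : Fin n × Fin n × Fin n =>
      (∑ u : Fin n, MvPolynomial.C (α u p.2.1 p.2.2) * MvPolynomial.X (p.1, u)) -
        ∑ s : Fin n, ∑ t : Fin n,
          MvPolynomial.C (α p.1 s t) * MvPolynomial.X (s, p.2.1) * MvPolynomial.X (t, p.2.2)))
    (η : g →ₗ[K] (MvPolynomial (Fin n × Fin n) K ⧸ J) ⊗[K] g)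
    (hη : η = b.constr K fun i : Fin n =>
      ∑ s : Fin n, Ideal.Quotient.mk J (MvPolynomial.X (s, i)) ⊗ₜ[K] b s) :
    ∀ x y : g, η ⁅x, y⁆ = ⁅η x, η y⁆ := by
  obtain rfl : J = LieAlgebra.structureIdeal α := hJ
  subst hη
  exact (LieAlgebra.structureMap_lie hα (LieAlgebra.isStructurePoint_mk_X α) :)

theorem eta_bracket_preserving
    (K : Type u) [Field K] [CharZero K]
    (g : Type u) [LieRing g] [LieAlgebra K g]
    (n : ℕ) (b : Module.Basis (Fin n) K g)
    (α : Fin n → Fin n → Fin n → K)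
    (hα : ∀ i j : Fin n, ⁅b i, b j⁆ = ∑ s : Fin n, α s i j • b s)
    (J : Ideal (MvPolynomial (Fin n × Fin n) K))
    (hJ : J = Ideal.span (Set.range fun p : Fin n × Fin n × Fin n =>
      (∑ u : Fin n, MvPolynomial.C (α u p.2.1 p.2.2) * MvPolynomial.X (p.1, u)) -
        ∑ s : Fin n, ∑ t : Fin n,
          MvPolynomial.C (α p.1 s t) * MvPolynomial.X (s, p.2.1) * MvPolynomial.X (t, p.2.2)))
    (η : g →ₗ[K] (MvPolynomial (Fin n × Fin n) K ⧸ J) ⊗[K] g)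
    (hη : η = b.constr K fun i : Fin n =>
      ∑ s : Fin n, Ideal.Quotient.mk J (MvPolynomial.X (s, i)) ⊗ₜ[K] b s) :
    ∀ x y : g, η ⁅x, y⁆ = ⁅η x, η y⁆ :=
  eta_bracket_preserving_general K g n b α hα J hJ η hη
end

section
/- With the explicit presentation below, the pair (C(g), η) is a universal pair for (g, g): for every commutative K-algebra C and every Lie algebra morphism f : g → C ⊗ g there exists a unique K-algebra homomorphism Φ : C(g) → C such that f = (Φ ⊗ id_g) ∘ η. -/
/-!
A `K`-algebra map `Φ : C(g) → C` is the same as a matrix `(c_{s i})` over `C` at which every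
`P_{(a,i,j)}` vanishes, and `(Φ ⊗ id) ∘ η` sends `b i` to `∑ s, Φ (x_{s i}) ⊗ b s`. So
`f = (Φ ⊗ id) ∘ η` holds exactly when `Φ (x_{s i})` is the coefficient of `b s` in `f (b i)`, and
this matrix of `f` is a zero of the `P_{(a,i,j)}`: comparing the coefficients of `b a` on both
sides of `f ⁅b i, b j⁆ = ⁅f (b i), f (b j)⁆` gives precisely `P_{(a,i,j)} = 0`.
-/

open TensorProduct

universe u

namespace Module.Basis

variable {K C M ι : Type*} [CommRing K] [CommRing C] [Algebra K C] [AddCommGroup M] [Module K M]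
  [Fintype ι] (b : Basis ι K M)

lemma sum_tmul_eq_sum_smul_baseChange (u : ι → C) :
    ∑ s, u s ⊗ₜ[K] b s = ∑ s, u s • b.baseChange C s := by
  simp [smul_tmul']

lemma baseChange_repr_sum_tmul (u : ι → C) :
    (b.baseChange C).repr (∑ s, u s ⊗ₜ[K] b s) = u := by
  rw [sum_tmul_eq_sum_smul_baseChange, repr_sum_self]

lemma sum_tmul_inj {u v : ι → C} : ∑ s, u s ⊗ₜ[K] b s = ∑ s, v s ⊗ₜ[K] b s ↔ u = v :=
  ⟨fun h => by
    simpa only [baseChange_repr_sum_tmul] using congrArg (fun x => ⇑((b.baseChange C).repr x)) h,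
    fun h => h ▸ rfl⟩

lemma sum_baseChange_repr_tmul_s3 (x : C ⊗[K] M) :
    ∑ s, (b.baseChange C).repr x s ⊗ₜ[K] b s = x := by
  rw [sum_tmul_eq_sum_smul_baseChange, (b.baseChange C).sum_repr x]

/-- `b.tensorMatrix f (s, i)` is the coefficient of `b s` in `f (b i)`. -/
noncomputable def tensorMatrix (f : M →ₗ[K] C ⊗[K] M) (p : ι × ι) : C :=
  (b.baseChange C).repr (f (b p.2)) p.1

lemma sum_tensorMatrix_tmul (f : M →ₗ[K] C ⊗[K] M) (i : ι) :
    ∑ s, b.tensorMatrix f (s, i) ⊗ₜ[K] b s = f (b i) :=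
  b.sum_baseChange_repr_tmul_s3 (f (b i))

lemma eq_rTensor_comp_constr_iff {A : Type*} [AddCommGroup A] [Module K A]
    (f : M →ₗ[K] C ⊗[K] M) (φ : A →ₗ[K] C) (y : ι × ι → A) :
    f = φ.rTensor M ∘ₗ b.constr K (fun i => ∑ s, y (s, i) ⊗ₜ[K] b s) ↔
      φ ∘ y = b.tensorMatrix f := by
  have h_basis (i : ι) : (φ.rTensor M ∘ₗ b.constr K (fun i => ∑ s, y (s, i) ⊗ₜ[K] b s)) (b i) =
      ∑ s, φ (y (s, i)) ⊗ₜ[K] b s := by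
    simp only [LinearMap.comp_apply, constr_basis, map_sum, LinearMap.rTensor_tmul]
  calc _ ↔ ∀ i, f (b i) = (φ.rTensor M ∘ₗ b.constr K (fun i => ∑ s, y (s, i) ⊗ₜ[K] b s)) (b i) :=
        ⟨fun h _ => by rw [h], b.ext⟩
    _ ↔ ∀ i, (fun s => b.tensorMatrix f (s, i)) = fun s => φ (y (s, i)) := by
        simp only [h_basis, ← b.sum_tensorMatrix_tmul f, b.sum_tmul_inj]
    _ ↔ _ := by
        simp only [funext_iff, Prod.forall, Function.comp_apply, eq_comm (a := φ _)]
        exact forall_comm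

end Module.Basis

def SatisfiesStructureRelations {K C ι : Type*} [CommRing K] [CommRing C] [Algebra K C]
    [Fintype ι] (α : ι → ι → ι → K) (c : ι × ι → C) : Prop :=
  ∀ a i j, ∑ u, α u i j • c (a, u) = ∑ s, ∑ t, α a s t • (c (s, i) * c (t, j))

namespace LieAlgebra

variable {K C g ι : Type*} [CommRing K] [CommRing C] [Algebra K C] [LieRing g] [LieAlgebra K g]
  [Fintype ι] {b : Module.Basis ι K g} {α : ι → ι → ι → K}

lemma lie_sum_tmul_basis (hα : ∀ i j, ⁅b i, b j⁆ = ∑ s, α s i j • b s) (u v : ι → C) :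
    ⁅∑ s, u s ⊗ₜ[K] b s, ∑ t, v t ⊗ₜ[K] b t⁆ =
      ∑ a, (∑ s, ∑ t, α a s t • (u s * v t)) ⊗ₜ[K] b a := by
  simp only [sum_lie_sum, ExtendScalars.bracket_tmul, hα, tmul_sum, tmul_smul, ← smul_tmul',
    sum_tmul]
  conv_rhs => rw [Finset.sum_comm]
  exact Finset.sum_congr rfl fun _ _ => Finset.sum_comm

lemma tensorMatrix_satisfiesStructureRelations (hα : ∀ i j, ⁅b i, b j⁆ = ∑ s, α s i j • b s)
    (f : g →ₗ⁅K⁆ C ⊗[K] g) : SatisfiesStructureRelations α (b.tensorMatrix f.toLinearMap) := by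
  set c := b.tensorMatrix f.toLinearMap
  have hc (i : ι) : f (b i) = ∑ s, c (s, i) ⊗ₜ[K] b s := (b.sum_tensorMatrix_tmul _ i).symm
  intro a i j
  have h_lhs : f ⁅b i, b j⁆ = ∑ a, (∑ u, α u i j • c (a, u)) ⊗ₜ[K] b a := by
    rw [hα, map_sum]
    simp only [map_smul, hc, Finset.smul_sum, smul_tmul', sum_tmul]
    exact Finset.sum_comm
  have h_rhs : ⁅f (b i), f (b j)⁆ = ∑ a, (∑ s, ∑ t, α a s t • (c (s, i) * c (t, j))) ⊗ₜ[K] b a := by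
    rw [hc, hc]
    exact lie_sum_tmul_basis hα _ _
  have h := f.map_lie (b i) (b j)
  rw [h_lhs, h_rhs, b.sum_tmul_inj] at h
  exact congrFun h a

end LieAlgebra

namespace MvPolynomial

variable {K A ι : Type*} [CommRing K] [CommRing A] [Algebra K A] [Fintype ι]

/-- The polynomial `P_{(a,i,j)}` of the presentation of `C(g)`, at `p = (a, i, j)`. -/
noncomputable def structurePoly (α : ι → ι → ι → K) (p : ι × ι × ι) : MvPolynomial (ι × ι) K :=
  (∑ u, C (α u p.2.1 p.2.2) * X (p.1, u)) -
    ∑ s, ∑ t, C (α p.1 s t) * X (s, p.2.1) * X (t, p.2.2)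

lemma span_structurePoly_le_ker_aeval {α : ι → ι → ι → K} {c : ι × ι → A}
    (hc : SatisfiesStructureRelations α c) :
    Ideal.span (Set.range (structurePoly α)) ≤ RingHom.ker (aeval c) := by
  rw [Ideal.span_le]
  rintro _ ⟨⟨a, i, j⟩, rfl⟩
  simp only [SetLike.mem_coe, RingHom.mem_ker, structurePoly, map_sub, map_sum, map_mul, aeval_C,
    aeval_X, sub_eq_zero, ← Algebra.smul_def, smul_mul_assoc]
  exact hc a i j

lemma existsUnique_quotient_algHom_comp_X {σ : Type*} (J : Ideal (MvPolynomial σ K)) (c : σ → A)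
    (hJ : J ≤ RingHom.ker (aeval c)) :
    ∃! Φ : (MvPolynomial σ K ⧸ J) →ₐ[K] A, Φ ∘ (fun p => Ideal.Quotient.mk J (X p)) = c := by
  have h_lift (p : σ) : Ideal.Quotient.liftₐ J (aeval c) hJ (Ideal.Quotient.mk J (X p)) = c p := by
    simpa using AlgHom.congr_fun (Ideal.Quotient.liftₐ_comp J (aeval c) hJ) (X p)
  refine ⟨Ideal.Quotient.liftₐ J (aeval c) hJ, _root_.funext h_lift, fun Ψ hΨ => ?_⟩
  refine Ideal.Quotient.algHom_ext K (algHom_ext fun p => ?_)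
  simpa [h_lift] using congrFun hΨ p

end MvPolynomial

theorem explicit_presentation_isUniversal_general
    (K : Type u) [Field K]
    (g : Type u) [LieRing g] [LieAlgebra K g]
    (n : ℕ) (b : Module.Basis (Fin n) K g)
    (α : Fin n → Fin n → Fin n → K)
    (hα : ∀ i j : Fin n, ⁅b i, b j⁆ = ∑ s : Fin n, α s i j • b s)
    (J : Ideal (MvPolynomial (Fin n × Fin n) K))
    (hJ : J = Ideal.span (Set.range fun p : Fin n × Fin n × Fin n =>
      (∑ u : Fin n, MvPolynomial.C (α u p.2.1 p.2.2) * MvPolynomial.X (p.1, u)) -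
        ∑ s : Fin n, ∑ t : Fin n,
          MvPolynomial.C (α p.1 s t) * MvPolynomial.X (s, p.2.1) * MvPolynomial.X (t, p.2.2)))
    (η : g →ₗ[K] (MvPolynomial (Fin n × Fin n) K ⧸ J) ⊗[K] g)
    (hη : η = b.constr K fun i : Fin n =>
      ∑ s : Fin n, Ideal.Quotient.mk J (MvPolynomial.X (s, i)) ⊗ₜ[K] b s) :
    ∀ (C : Type u) [CommRing C] [Algebra K C], ∀ f : g →ₗ⁅K⁆ C ⊗[K] g,
      ∃! Φ : (MvPolynomial (Fin n × Fin n) K ⧸ J) →ₐ[K] C,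
        ∀ x : g, f x = LinearMap.rTensor g Φ.toLinearMap (η x) := by
  intro C _ _ f
  have h_spec (Φ : (MvPolynomial (Fin n × Fin n) K ⧸ J) →ₐ[K] C) :
      (∀ x : g, f x = LinearMap.rTensor g Φ.toLinearMap (η x)) ↔
        Φ ∘ (fun p => Ideal.Quotient.mk J (MvPolynomial.X p)) = b.tensorMatrix f.toLinearMap := by
    rw [← AlgHom.coe_toLinearMap, ← b.eq_rTensor_comp_constr_iff, ← hη, LinearMap.ext_iff]
    rfl
  have h_ker : J ≤ RingHom.ker (MvPolynomial.aeval (b.tensorMatrix f.toLinearMap)) := by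
    rw [hJ]
    exact MvPolynomial.span_structurePoly_le_ker_aeval
      (LieAlgebra.tensorMatrix_satisfiesStructureRelations hα f)
  simpa only [h_spec] using MvPolynomial.existsUnique_quotient_algHom_comp_X J _ h_ker

theorem explicit_presentation_isUniversal
    (K : Type u) [Field K] [CharZero K]
    (g : Type u) [LieRing g] [LieAlgebra K g]
    (n : ℕ) (b : Module.Basis (Fin n) K g)
    (α : Fin n → Fin n → Fin n → K)
    (hα : ∀ i j : Fin n, ⁅b i, b j⁆ = ∑ s : Fin n, α s i j • b s)
    (J : Ideal (MvPolynomial (Fin n × Fin n) K))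
    (hJ : J = Ideal.span (Set.range fun p : Fin n × Fin n × Fin n =>
      (∑ u : Fin n, MvPolynomial.C (α u p.2.1 p.2.2) * MvPolynomial.X (p.1, u)) -
        ∑ s : Fin n, ∑ t : Fin n,
          MvPolynomial.C (α p.1 s t) * MvPolynomial.X (s, p.2.1) * MvPolynomial.X (t, p.2.2)))
    (η : g →ₗ[K] (MvPolynomial (Fin n × Fin n) K ⧸ J) ⊗[K] g)
    (hη : η = b.constr K fun i : Fin n =>
      ∑ s : Fin n, Ideal.Quotient.mk J (MvPolynomial.X (s, i)) ⊗ₜ[K] b s) :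
    ∀ (C : Type u) [CommRing C] [Algebra K C], ∀ f : g →ₗ⁅K⁆ C ⊗[K] g,
      ∃! Φ : (MvPolynomial (Fin n × Fin n) K ⧸ J) →ₐ[K] C,
        ∀ x : g, f x = LinearMap.rTensor g Φ.toLinearMap (η x) :=
  explicit_presentation_isUniversal_general K g n b α hα J hJ η hη
end

section
/- Let K be a field of characteristic zero, let a and b be finite-dimensional Lie algebras over K, and let c be any Lie algebra over K. Let (A₁, η₁) be a universal pair for (a, b), let (A₂, η₂) be a universal pair for (b, c), and let (A₃, η₃) be a universal pair for (a, c). Then the composite c → A₂ ⊗ b → A₂ ⊗ (A₁ ⊗ a) ≅ (A₁ ⊗ A₂) ⊗ a, obtained by applying η₂, then id_{A₂} ⊗ η₁, then the canonical associativity and flip isomorphisms, is a Lie algebra morphism from c to (A₁ ⊗ A₂) ⊗ a, and there exists a unique K-algebra homomorphism Δ : A₃ → A₁ ⊗ A₂ such that this composite equals (Δ ⊗ id_a) ∘ η₃. -/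
/-!
Statement 5: Let `a`, `b` be finite-dimensional Lie algebras and `c` any Lie algebra over a
field `K` of characteristic zero. Let `(A₁, η₁)`, `(A₂, η₂)`, `(A₃, η₃)` be universal pairs
for `(a, b)`, `(b, c)`, `(a, c)` respectively. Then the composite
`c → A₂ ⊗ b → A₂ ⊗ (A₁ ⊗ a) ≅ (A₁ ⊗ A₂) ⊗ a` (apply `η₂`, then `id ⊗ η₁`, then the canonical
associativity and flip isomorphisms) is a Lie algebra morphism, and there is a unique
`K`-algebra homomorphism `Δ : A₃ → A₁ ⊗ A₂` with this composite equal to `(Δ ⊗ id_a) ∘ η₃`.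
-/

open TensorProduct

universe u

section Aux

variable {K : Type u} [Field K]
    {A₁ : Type u} [CommRing A₁] [Algebra K A₁]
    {A₂ : Type u} [CommRing A₂] [Algebra K A₂]
    {a : Type u} [LieRing a] [LieAlgebra K a]
    {b : Type u} [LieRing b] [LieAlgebra K b]

/-- The rearrangement map `A₂ ⊗ (A₁ ⊗ a) → (A₁ ⊗ A₂) ⊗ a` preserves brackets. -/
lemma phi_bracket (u v : A₂ ⊗[K] (A₁ ⊗[K] a)) :
    (LinearMap.rTensor a (TensorProduct.comm K A₂ A₁).toLinearMap ∘ₗ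
      (TensorProduct.assoc K A₂ A₁ a).symm.toLinearMap) ⁅u, v⁆ =
    ⁅(LinearMap.rTensor a (TensorProduct.comm K A₂ A₁).toLinearMap ∘ₗ
      (TensorProduct.assoc K A₂ A₁ a).symm.toLinearMap) u,
      (LinearMap.rTensor a (TensorProduct.comm K A₂ A₁).toLinearMap ∘ₗ
      (TensorProduct.assoc K A₂ A₁ a).symm.toLinearMap) v⁆ := by
  set φ := LinearMap.rTensor a (TensorProduct.comm K A₂ A₁).toLinearMap ∘ₗ
      (TensorProduct.assoc K A₂ A₁ a).symm.toLinearMap with hφ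
  have h0l : ∀ w : A₂ ⊗[K] (A₁ ⊗[K] a), ⁅(0 : A₂ ⊗[K] (A₁ ⊗[K] a)), w⁆ = 0 :=
    fun w => zero_lie w
  have h0r : ∀ w : A₂ ⊗[K] (A₁ ⊗[K] a), ⁅w, (0 : A₂ ⊗[K] (A₁ ⊗[K] a))⁆ = 0 :=
    fun w => lie_zero w
  have hal : ∀ w₁ w₂ w : A₂ ⊗[K] (A₁ ⊗[K] a), ⁅w₁ + w₂, w⁆ = ⁅w₁, w⁆ + ⁅w₂, w⁆ :=
    fun w₁ w₂ w => add_lie w₁ w₂ w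
  have har : ∀ w w₁ w₂ : A₂ ⊗[K] (A₁ ⊗[K] a), ⁅w, w₁ + w₂⁆ = ⁅w, w₁⁆ + ⁅w, w₂⁆ :=
    fun w w₁ w₂ => lie_add w w₁ w₂
  have h0l' : ∀ w : (A₁ ⊗[K] A₂) ⊗[K] a, ⁅(0 : (A₁ ⊗[K] A₂) ⊗[K] a), w⁆ = 0 :=
    fun w => zero_lie w
  have h0r' : ∀ w : (A₁ ⊗[K] A₂) ⊗[K] a, ⁅w, (0 : (A₁ ⊗[K] A₂) ⊗[K] a)⁆ = 0 :=
    fun w => lie_zero w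
  have hal' : ∀ w₁ w₂ w : (A₁ ⊗[K] A₂) ⊗[K] a, ⁅w₁ + w₂, w⁆ = ⁅w₁, w⁆ + ⁅w₂, w⁆ :=
    fun w₁ w₂ w => add_lie w₁ w₂ w
  have har' : ∀ w w₁ w₂ : (A₁ ⊗[K] A₂) ⊗[K] a, ⁅w, w₁ + w₂⁆ = ⁅w, w₁⁆ + ⁅w, w₂⁆ :=
    fun w w₁ w₂ => lie_add w w₁ w₂
  induction u using TensorProduct.induction_on with
  | zero => rw [h0l, map_zero, h0l']
  | add u₁ u₂ ih₁ ih₂ => rw [hal, map_add, map_add, hal', ih₁, ih₂]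
  | tmul s p =>
    induction v using TensorProduct.induction_on with
    | zero => rw [h0r, map_zero, h0r']
    | add v₁ v₂ ih₁ ih₂ => rw [har, map_add, map_add, har', ih₁, ih₂]
    | tmul t q =>
      induction p using TensorProduct.induction_on with
      | zero => rw [TensorProduct.tmul_zero, h0l, map_zero, h0l']
      | add p₁ p₂ ih₁ ih₂ =>
        rw [TensorProduct.tmul_add, hal, map_add, map_add, hal', ih₁, ih₂]
      | tmul s₁ x =>
        induction q using TensorProduct.induction_on with
        | zero => rw [TensorProduct.tmul_zero, h0r, map_zero, h0r']
        | add q₁ q₂ ih₁ ih₂ =>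
          rw [TensorProduct.tmul_add, har, map_add, map_add, har', ih₁, ih₂]
        | tmul t₁ y =>
          simp only [hφ, LieAlgebra.ExtendScalars.bracket_tmul, LinearMap.comp_apply,
            LinearEquiv.coe_coe, TensorProduct.assoc_symm_tmul, LinearMap.rTensor_tmul,
            TensorProduct.comm_tmul, Algebra.TensorProduct.tmul_mul_tmul]

/-- `lTensor` of a Lie morphism preserves brackets. -/
lemma lTensor_lie (η : b →ₗ⁅K⁆ A₁ ⊗[K] a) (u v : A₂ ⊗[K] b) :
    LinearMap.lTensor A₂ η.toLinearMap ⁅u, v⁆ =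
    ⁅LinearMap.lTensor A₂ η.toLinearMap u, LinearMap.lTensor A₂ η.toLinearMap v⁆ := by
  induction u using TensorProduct.induction_on with
  | zero => simp [zero_lie]
  | add u₁ u₂ ih₁ ih₂ => simp only [add_lie, map_add, ih₁, ih₂]
  | tmul s x =>
    induction v using TensorProduct.induction_on with
    | zero => simp [lie_zero]
    | add v₁ v₂ ih₁ ih₂ => simp only [lie_add, map_add, ih₁, ih₂]
    | tmul t y =>
      simp only [LieAlgebra.ExtendScalars.bracket_tmul, LinearMap.lTensor_tmul,
        LieHom.coe_toLinearMap, LieHom.map_lie]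

end Aux

theorem comultiplication_exists_unique
    (K : Type u) [Field K] [CharZero K]
    (a : Type u) [LieRing a] [LieAlgebra K a] [FiniteDimensional K a]
    (b : Type u) [LieRing b] [LieAlgebra K b] [FiniteDimensional K b]
    (c : Type u) [LieRing c] [LieAlgebra K c]
    (A₁ : Type u) [CommRing A₁] [Algebra K A₁]
    (η₁ : b →ₗ⁅K⁆ A₁ ⊗[K] a) (h₁ : IsUniversalLiePair K a b A₁ η₁)
    (A₂ : Type u) [CommRing A₂] [Algebra K A₂]
    (η₂ : c →ₗ⁅K⁆ A₂ ⊗[K] b) (h₂ : IsUniversalLiePair K b c A₂ η₂)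
    (A₃ : Type u) [CommRing A₃] [Algebra K A₃]
    (η₃ : c →ₗ⁅K⁆ A₃ ⊗[K] a) (h₃ : IsUniversalLiePair K a c A₃ η₃) :
    ∀ T : c →ₗ[K] (A₁ ⊗[K] A₂) ⊗[K] a,
      T = LinearMap.rTensor a (TensorProduct.comm K A₂ A₁).toLinearMap ∘ₗ
            (TensorProduct.assoc K A₂ A₁ a).symm.toLinearMap ∘ₗ
            LinearMap.lTensor A₂ η₁.toLinearMap ∘ₗ η₂.toLinearMap →
      (∀ x y : c, T ⁅x, y⁆ = ⁅T x, T y⁆) ∧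
      ∃! Δ : A₃ →ₐ[K] A₁ ⊗[K] A₂,
        ∀ x : c, T x = LinearMap.rTensor a Δ.toLinearMap (η₃ x) := by
  intro T hT
  have hlie : ∀ x y : c, T ⁅x, y⁆ = ⁅T x, T y⁆ := by
    intro x y
    subst hT
    simp only [LinearMap.comp_apply, LieHom.coe_toLinearMap, LieHom.map_lie]
    rw [lTensor_lie η₁]
    exact phi_bracket _ _
  refine ⟨hlie, ?_⟩
  exact h₃ (A₁ ⊗[K] A₂) { toLinearMap := T, map_lie' := hlie _ _ }
end

section
/- Let K be a field of characteristic zero, let G be an abelian group, let g be a finite-dimensional Lie algebra over K, and let (B, η) be a universal coacting bialgebra of g. For a bialgebra homomorphism Φ : B → K[G], set g_σ^Φ = { x ∈ g | (Φ ⊗ id_g)(η(x)) = σ ⊗ x } for each σ ∈ G. Then (g_σ^Φ)_{σ ∈ G} is a G-grading of the Lie algebra g, and the assignment Φ ↦ (g_σ^Φ)_{σ ∈ G} is a bijection from the set of bialgebra homomorphisms B → K[G] onto the set of G-gradings of g. -/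
/-!
Statement 9: Let `G` be an abelian group, `g` a finite-dimensional Lie algebra over a field
`K` of characteristic zero, and `(B, η)` a universal coacting bialgebra of `g`. For a
bialgebra homomorphism `Φ : B → K[G]` set `g_σ^Φ = { x | (Φ ⊗ id)(η x) = σ ⊗ x }`. Then
`(g_σ^Φ)_σ` is a `G`-grading of the Lie algebra `g`, and `Φ ↦ (g_σ^Φ)_σ` is a bijection from
the bialgebra homomorphisms `B → K[G]` onto the `G`-gradings of `g`.
-/

open TensorProduct

universe u

/-- A coaction of a commutative `K`-bialgebra `B` on the Lie algebra `g`. -/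
def IsLieCoaction (K : Type u) [Field K]
    (g : Type u) [LieRing g] [LieAlgebra K g]
    (B : Type u) [CommRing B] [Bialgebra K B]
    (η : g →ₗ⁅K⁆ B ⊗[K] g) : Prop :=
  (∀ x : g, TensorProduct.lid K g
      (LinearMap.rTensor g (Coalgebra.counit (R := K) (A := B)) (η x)) = x) ∧
  ∀ x : g, LinearMap.rTensor g (Coalgebra.comul (R := K) (A := B)) (η x) =
    (TensorProduct.assoc K B B g).symm (LinearMap.lTensor B η.toLinearMap (η x))

/-- The diagonal group-like map `σ ↦ σ ⊗ σ` on the group algebra. -/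
noncomputable def diagMonoidHom (K : Type u) [Field K] (G : Type u) [CommGroup G] :
    G →* MonoidAlgebra K G ⊗[K] MonoidAlgebra K G where
  toFun σ := MonoidAlgebra.of K G σ ⊗ₜ[K] MonoidAlgebra.of K G σ
  map_one' := by
    show MonoidAlgebra.of K G 1 ⊗ₜ[K] MonoidAlgebra.of K G 1 = 1
    rw [map_one, Algebra.TensorProduct.one_def]
  map_mul' σ τ := by
    show MonoidAlgebra.of K G (σ * τ) ⊗ₜ[K] MonoidAlgebra.of K G (σ * τ)
      = (MonoidAlgebra.of K G σ ⊗ₜ[K] MonoidAlgebra.of K G σ) *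
        (MonoidAlgebra.of K G τ ⊗ₜ[K] MonoidAlgebra.of K G τ)
    rw [map_mul, Algebra.TensorProduct.tmul_mul_tmul]

/-- The standard comultiplication of the group algebra `K[G]`, determined by
`Δ(σ) = σ ⊗ σ` for `σ ∈ G`. -/
noncomputable def groupComul (K : Type u) [Field K] (G : Type u) [CommGroup G] :
    MonoidAlgebra K G →ₗ[K] MonoidAlgebra K G ⊗[K] MonoidAlgebra K G :=
  (MonoidAlgebra.lift K (MonoidAlgebra K G ⊗[K] MonoidAlgebra K G) G (diagMonoidHom K G)).toLinearMap

/-- The standard counit of the group algebra `K[G]`, determined by `ε(σ) = 1` for `σ ∈ G`. -/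
noncomputable def groupCounit (K : Type u) [Field K] (G : Type u) [CommGroup G] :
    MonoidAlgebra K G →ₗ[K] K :=
  (MonoidAlgebra.lift K K G (1 : G →* K)).toLinearMap

/-- A bialgebra homomorphism from a commutative `K`-bialgebra `B` to the group algebra
`K[G]` (with its standard Hopf algebra structure in which every `σ ∈ G` is group-like):
a `K`-algebra homomorphism commuting with the counits and comultiplications. -/
structure BialgHomToGroupAlgebra (K : Type u) [Field K] (G : Type u) [CommGroup G]
    (B : Type u) [CommRing B] [Bialgebra K B] : Type u where
  toAlgHom : B →ₐ[K] MonoidAlgebra K G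
  counit_comp : ∀ b : B, groupCounit K G (toAlgHom b) = Coalgebra.counit (R := K) (A := B) b
  comul_comp : ∀ b : B, groupComul K G (toAlgHom b) =
    TensorProduct.map toAlgHom.toLinearMap toAlgHom.toLinearMap
      (Coalgebra.comul (R := K) (A := B) b)

/-- The `σ`-homogeneous component `{ x | (Φ ⊗ id)(η x) = σ ⊗ x }` of the grading of `g`
associated to `Φ : B → K[G]`. -/
noncomputable def lieGrade {K : Type u} [Field K] {G : Type u} [CommGroup G]
    {g : Type u} [LieRing g] [LieAlgebra K g]
    {B : Type u} [CommRing B] [Bialgebra K B]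
    (η : g →ₗ⁅K⁆ B ⊗[K] g) (Φ : B →ₐ[K] MonoidAlgebra K G) (σ : G) : Submodule K g :=
  LinearMap.ker (LinearMap.rTensor g Φ.toLinearMap ∘ₗ η.toLinearMap
    - TensorProduct.mk K (MonoidAlgebra K G) g (MonoidAlgebra.of K G σ))

/-- A `G`-grading of the Lie algebra `g`: an internal direct sum decomposition
`g = ⊕_σ g_σ` with `⁅g_σ, g_τ⁆ ⊆ g_{σ τ}`. -/
def IsLieGrading (K : Type u) [Field K] (G : Type u) [CommGroup G] [DecidableEq G]
    (g : Type u) [LieRing g] [LieAlgebra K g] (gr : G → Submodule K g) : Prop :=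
  DirectSum.IsInternal gr ∧
    ∀ σ τ : G, ∀ x ∈ gr σ, ∀ y ∈ gr τ, ⁅x, y⁆ ∈ gr (σ * τ)

/-
A counital, coassociative coaction `f : M → K[G] ⊗ M` of the group algebra is the same thing
as a `G`-grading of `M`. Its homogeneous components are the spaces `{x | f x = σ ⊗ x}`: the
`σ`-coefficient of `f x` lies in the `σ`-component by coassociativity (since `Δ σ = σ ⊗ σ`),
and these coefficients add up to `x` by counitality. Conversely a grading gives the coaction
`x ↦ ∑ σ ⊗ x_σ`.

For a bialgebra map `Φ : B → K[G]`, the map `(Φ ⊗ id) ∘ η` is such a coaction and a Lie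
algebra map, so its components form a Lie grading; it is determined by its components, so by
the uniqueness in the universal property `Φ` is determined by its grading. For a Lie grading,
`x ↦ ∑ σ ⊗ x_σ` is a Lie algebra map `g → K[G] ⊗ g`, hence equals `(Φ ⊗ id) ∘ η` for an
algebra map `Φ`. That `Φ` respects counit and comultiplication follows again from uniqueness,
applied with `C = K` and `C = K[G] ⊗ K[G]`.
-/

open LinearMap

section TensorCoeff

variable {K : Type*} [Field K] {G : Type*} [DecidableEq G]
  {M : Type*} [AddCommGroup M] [Module K M] {N : Type*} [AddCommGroup N] [Module K N]

variable (K G M) in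
noncomputable def tensorCoeffEquiv : MonoidAlgebra K G ⊗[K] M ≃ₗ[K] (G →₀ M) :=
  (MonoidAlgebra.coeffLinearEquiv K).rTensor M ≪≫ₗ finsuppScalarLeft K M G

@[simp]
lemma tensorCoeffEquiv_single_tmul (σ : G) (k : K) (m : M) :
    tensorCoeffEquiv K G M (MonoidAlgebra.single σ k ⊗ₜ m) = Finsupp.single σ (k • m) := by
  ext τ
  simp [tensorCoeffEquiv, Finsupp.single_apply]

lemma tensorCoeffEquiv_lTensor (φ : M →ₗ[K] N) (z : MonoidAlgebra K G ⊗[K] M) :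
    tensorCoeffEquiv K G N (lTensor _ φ z) = (tensorCoeffEquiv K G M z).mapRange φ φ.map_zero := by
  have : (tensorCoeffEquiv K G N).toLinearMap ∘ₗ lTensor _ φ =
      Finsupp.mapRange.linearMap φ ∘ₗ (tensorCoeffEquiv K G M).toLinearMap := by
    ext
    simp
  exact congr($this z)

end TensorCoeff

section GroupCoaction

variable {K : Type u} [Field K] {G : Type u} [CommGroup G]
  {M : Type*} [AddCommGroup M] [Module K M] {N : Type*} [AddCommGroup N] [Module K N]

lemma groupAlgebra_tensor_ext {φ ψ : MonoidAlgebra K G ⊗[K] M →ₗ[K] N}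
    (h : ∀ σ m, φ (MonoidAlgebra.of K G σ ⊗ₜ m) = ψ (MonoidAlgebra.of K G σ ⊗ₜ m)) :
    φ = ψ := by
  ext σ m
  simpa using h σ m

variable (K G) in
structure IsGroupCoaction (f : M →ₗ[K] MonoidAlgebra K G ⊗[K] M) : Prop where
  counit (x : M) : TensorProduct.lid K M (rTensor M (groupCounit K G) (f x)) = x
  coassoc (x : M) : rTensor M (groupComul K G) (f x) =
    (TensorProduct.assoc K _ _ M).symm (lTensor _ f (f x))

/-- `lieGrade η Φ` is by definition `coactionGrade ((Φ ⊗ id) ∘ η)`. -/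
noncomputable def coactionGrade (f : M →ₗ[K] MonoidAlgebra K G ⊗[K] M) (σ : G) :
    Submodule K M :=
  ker (f - TensorProduct.mk K _ M (MonoidAlgebra.of K G σ))

lemma mem_coactionGrade {f : M →ₗ[K] MonoidAlgebra K G ⊗[K] M} {σ : G} {x : M} :
    x ∈ coactionGrade f σ ↔ f x = MonoidAlgebra.of K G σ ⊗ₜ x := by
  simp [coactionGrade, sub_eq_zero]

variable [DecidableEq G]

lemma tensorCoeffEquiv_assoc_rTensor_groupComul (z : MonoidAlgebra K G ⊗[K] M) (σ : G) :
    tensorCoeffEquiv K G _ (TensorProduct.assoc K _ _ M (rTensor M (groupComul K G) z)) σ =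
      MonoidAlgebra.of K G σ ⊗ₜ tensorCoeffEquiv K G M z σ := by
  have : Finsupp.lapply σ ∘ₗ (tensorCoeffEquiv K G _).toLinearMap ∘ₗ
      (TensorProduct.assoc K _ _ M).toLinearMap ∘ₗ rTensor M (groupComul K G) =
      TensorProduct.mk K _ M (MonoidAlgebra.of K G σ) ∘ₗ Finsupp.lapply σ ∘ₗ
        (tensorCoeffEquiv K G M).toLinearMap := by
    refine groupAlgebra_tensor_ext fun τ m => ?_
    simp only [groupComul, diagMonoidHom]
    by_cases h : τ = σ <;> simp [h]
  exact congr($this z)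

lemma sum_tensorCoeffEquiv (z : MonoidAlgebra K G ⊗[K] M) :
    (tensorCoeffEquiv K G M z).sum (fun _ m => m) =
      TensorProduct.lid K M (rTensor M (groupCounit K G) z) := by
  have : Finsupp.lsum ℕ (fun _ => LinearMap.id) ∘ₗ (tensorCoeffEquiv K G M).toLinearMap =
      (TensorProduct.lid K M).toLinearMap ∘ₗ rTensor M (groupCounit K G) := by
    refine groupAlgebra_tensor_ext fun τ m => ?_
    simp [groupCounit]
  exact congr($this z)

variable {f : M →ₗ[K] MonoidAlgebra K G ⊗[K] M}

lemma tensorCoeffEquiv_of_mem_coactionGrade {σ : G} {x : M} (hx : x ∈ coactionGrade f σ) :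
    tensorCoeffEquiv K G M (f x) = Finsupp.single σ x := by
  rw [mem_coactionGrade.1 hx, MonoidAlgebra.of_apply, tensorCoeffEquiv_single_tmul, one_smul]

lemma iSupIndep_coactionGrade (f : M →ₗ[K] MonoidAlgebra K G ⊗[K] M) :
    iSupIndep (coactionGrade f) := by
  refine (iSupIndep_iff_finsetSum_eq_zero_imp_eq_zero _).2 fun s v hv hsum σ hσ => ?_
  have := congr(tensorCoeffEquiv K G M (f $hsum) σ)
  rw [map_sum, map_sum,
    Finset.sum_congr rfl fun τ hτ => tensorCoeffEquiv_of_mem_coactionGrade (hv τ hτ),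
    Finset.sum_apply'] at this
  simpa [Finsupp.single_apply, hσ] using this

lemma eq_of_coactionGrade_eq {f' : M →ₗ[K] MonoidAlgebra K G ⊗[K] M}
    (hf : DirectSum.IsInternal (coactionGrade f)) (h : coactionGrade f = coactionGrade f') :
    f = f' := by
  let := hf.chooseDecomposition
  refine DirectSum.decompose_lhom_ext (coactionGrade f) fun σ => LinearMap.ext fun x => ?_
  have hx' : (x : M) ∈ coactionGrade f' σ := h ▸ x.2
  simp [mem_coactionGrade.1 x.2, mem_coactionGrade.1 hx']

namespace IsGroupCoaction

variable (hf : IsGroupCoaction K G f)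
include hf

lemma tensorCoeffEquiv_mem_coactionGrade (x : M) (σ : G) :
    tensorCoeffEquiv K G M (f x) σ ∈ coactionGrade f σ := by
  rw [mem_coactionGrade]
  calc f (tensorCoeffEquiv K G M (f x) σ)
      = tensorCoeffEquiv K G _ (lTensor _ f (f x)) σ := by rw [tensorCoeffEquiv_lTensor]; rfl
    _ = tensorCoeffEquiv K G _
          (TensorProduct.assoc K _ _ M (rTensor M (groupComul K G) (f x))) σ := by
      rw [hf.coassoc, LinearEquiv.apply_symm_apply]
    _ = _ := tensorCoeffEquiv_assoc_rTensor_groupComul _ _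

lemma iSup_coactionGrade_eq_top : ⨆ σ, coactionGrade f σ = ⊤ := by
  refine eq_top_iff.2 fun x _ => ?_
  rw [← hf.counit x, ← sum_tensorCoeffEquiv]
  exact Submodule.finsuppSum_mem _ _ _ _ fun σ _ =>
    Submodule.mem_iSup_of_mem σ (hf.tensorCoeffEquiv_mem_coactionGrade x σ)

theorem isInternal_coactionGrade : DirectSum.IsInternal (coactionGrade f) :=
  DirectSum.isInternal_submodule_of_iSupIndep_of_iSup_eq_top (iSupIndep_coactionGrade f)
    hf.iSup_coactionGrade_eq_top

end IsGroupCoaction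

end GroupCoaction

section GradedCoaction

variable {K : Type u} [Field K] {G : Type u} [CommGroup G] [DecidableEq G]
  {M : Type*} [AddCommGroup M] [Module K M]
  (gr : G → Submodule K M) [DirectSum.Decomposition gr]
  {C : Type u} [CommRing C] [Algebra K C]

noncomputable def gradedCoaction (u : G →* C) : M →ₗ[K] C ⊗[K] M :=
  DirectSum.toModule K G _ (fun σ => TensorProduct.mk K C M (u σ) ∘ₗ (gr σ).subtype) ∘ₗ
    (DirectSum.decomposeLinearEquiv gr).toLinearMap

variable {gr} in
lemma gradedCoaction_of_mem (u : G →* C) {σ : G} {x : M} (hx : x ∈ gr σ) :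
    gradedCoaction gr u x = u σ ⊗ₜ x := by
  simp [gradedCoaction, DirectSum.decomposeLinearEquiv_apply, DirectSum.decompose_of_mem _ hx,
    ← DirectSum.lof_eq_of K]

lemma rTensor_lift_comp_gradedCoaction (u : G →* C) :
    rTensor M (MonoidAlgebra.lift K C G u).toLinearMap ∘ₗ
      gradedCoaction gr (MonoidAlgebra.of K G) = gradedCoaction gr u :=
  DirectSum.decompose_lhom_ext gr fun σ => LinearMap.ext fun x => by
    simp [gradedCoaction_of_mem _ x.2]

lemma gradedCoaction_one :
    gradedCoaction gr (1 : G →* K) = (TensorProduct.lid K M).symm.toLinearMap :=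
  DirectSum.decompose_lhom_ext gr fun σ => LinearMap.ext fun x => by
    simp [gradedCoaction_of_mem _ x.2]

lemma assoc_symm_comp_lTensor_gradedCoaction (u : G →* C) (u₂ : G →* C ⊗[K] C)
    (hu₂ : ∀ σ, u₂ σ = u σ ⊗ₜ u σ) :
    (TensorProduct.assoc K C C M).symm.toLinearMap ∘ₗ lTensor C (gradedCoaction gr u) ∘ₗ
      gradedCoaction gr u = gradedCoaction gr u₂ :=
  DirectSum.decompose_lhom_ext gr fun σ => LinearMap.ext fun x => by
    simp [gradedCoaction_of_mem _ x.2, hu₂]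

lemma tensorCoeffEquiv_gradedCoaction (x : M) (σ : G) :
    tensorCoeffEquiv K G M (gradedCoaction gr (MonoidAlgebra.of K G) x) σ =
      DirectSum.decompose gr x σ := by
  induction x using DirectSum.Decomposition.inductionOn gr with
  | zero => simp
  | @homogeneous τ x =>
    rw [gradedCoaction_of_mem _ x.2, DirectSum.decompose_coe]
    by_cases h : τ = σ
    · subst h; simp
    · rw [DirectSum.of_eq_of_ne _ _ _ (Ne.symm h)]; simp [h]
  | add x y hx hy => simp [hx, hy]

theorem coactionGrade_gradedCoaction :
    coactionGrade (gradedCoaction gr (MonoidAlgebra.of K G)) = gr := by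
  ext σ x
  refine ⟨fun hx => ?_, fun hx => mem_coactionGrade.2 (gradedCoaction_of_mem _ hx)⟩
  have h := tensorCoeffEquiv_gradedCoaction gr x σ
  rw [tensorCoeffEquiv_of_mem_coactionGrade hx, Finsupp.single_eq_same] at h
  exact h ▸ (DirectSum.decompose gr x σ).2

end GradedCoaction

section Lie

variable {K : Type u} [Field K] {L : Type u} [LieRing L] [LieAlgebra K L]

noncomputable def AlgHom.rTensorLieHom {A C : Type u} [CommRing A] [Algebra K A] [CommRing C]
    [Algebra K C] (Φ : A →ₐ[K] C) : A ⊗[K] L →ₗ⁅K⁆ C ⊗[K] L :=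
  { rTensor L Φ.toLinearMap with
    map_lie' := fun {z w} => by
      induction z using TensorProduct.induction_on with
      | zero => simp
      | add z z' hz hz' => simp_all [add_lie]
      | tmul a x =>
        induction w using TensorProduct.induction_on with
        | zero => simp
        | add w w' hw hw' => simp_all [lie_add]
        | tmul b y => simp [LieAlgebra.ExtendScalars.bracket_tmul] }

variable {G : Type u} [CommGroup G]

lemma lie_mem_coactionGrade (f : L →ₗ⁅K⁆ MonoidAlgebra K G ⊗[K] L) {σ τ : G} {x y : L}
    (hx : x ∈ coactionGrade f.toLinearMap σ) (hy : y ∈ coactionGrade f.toLinearMap τ) :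
    ⁅x, y⁆ ∈ coactionGrade f.toLinearMap (σ * τ) := by
  rw [mem_coactionGrade, LieHom.coe_toLinearMap] at hx hy ⊢
  rw [LieHom.map_lie, hx, hy, LieAlgebra.ExtendScalars.bracket_tmul, map_mul]

variable [DecidableEq G] {C : Type u} [CommRing C] [Algebra K C]

noncomputable def gradedLieCoaction (gr : G → Submodule K L) [DirectSum.Decomposition gr]
    (u : G →* C) (hgr : ∀ σ τ : G, ∀ x ∈ gr σ, ∀ y ∈ gr τ, ⁅x, y⁆ ∈ gr (σ * τ)) :
    L →ₗ⁅K⁆ C ⊗[K] L :=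
  { gradedCoaction gr u with
    map_lie' := fun {x y} => by
      induction x using DirectSum.Decomposition.inductionOn gr with
      | zero => simp
      | add x x' hx hx' => simp_all [add_lie]
      | @homogeneous σ x =>
        induction y using DirectSum.Decomposition.inductionOn gr with
        | zero => simp
        | add y y' hy hy' => simp_all [lie_add]
        | @homogeneous τ y =>
          simp [gradedCoaction_of_mem _ x.2, gradedCoaction_of_mem _ y.2,
            gradedCoaction_of_mem _ (hgr σ τ x x.2 y y.2),
            LieAlgebra.ExtendScalars.bracket_tmul] }

end Lie

section Bialgebra

variable {K : Type u} [Field K] {g : Type u} [LieRing g] [LieAlgebra K g]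
  {B : Type u} [CommRing B] [Bialgebra K B] {η : g →ₗ⁅K⁆ B ⊗[K] g}
  {C : Type u} [CommRing C] [Algebra K C]

lemma IsUniversalLiePair.algHom_ext {h : Type u} [LieRing h] [LieAlgebra K h] {A : Type u}
    [CommRing A] [Algebra K A] {η : h →ₗ⁅K⁆ A ⊗[K] g} (huniv : IsUniversalLiePair K g h A η)
    {Φ Φ' : A →ₐ[K] C}
    (heq : ∀ x, rTensor g Φ.toLinearMap (η x) = rTensor g Φ'.toLinearMap (η x)) : Φ = Φ' :=
  (huniv C (Φ.rTensorLieHom.comp η)).unique (fun _ => rfl) heq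

lemma IsLieCoaction.rTensor_map_comul (hcoact : IsLieCoaction K g B η) (Φ : B →ₐ[K] C)
    (x : g) :
    rTensor g (map Φ.toLinearMap Φ.toLinearMap ∘ₗ Coalgebra.comul) (η x) =
      (TensorProduct.assoc K C C g).symm (lTensor C (rTensor g Φ.toLinearMap ∘ₗ η.toLinearMap)
        (rTensor g Φ.toLinearMap (η x))) := by
  rw [rTensor_comp_apply, hcoact.2, rTensor, map_map_assoc_symm, map_lTensor, ← rTensor,
    ← comp_apply (lTensor C _), lTensor_comp_rTensor]

namespace BialgHomToGroupAlgebra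

variable {G : Type u} [CommGroup G]

lemma toAlgHom_injective :
    Function.Injective
      (toAlgHom : BialgHomToGroupAlgebra K G B → B →ₐ[K] MonoidAlgebra K G) := by
  rintro ⟨Φ, _, _⟩ ⟨Φ', _, _⟩ rfl
  rfl

variable (Φ : BialgHomToGroupAlgebra K G B) (hcoact : IsLieCoaction K g B η)
include hcoact

lemma isGroupCoaction :
    IsGroupCoaction K G (rTensor g Φ.toAlgHom.toLinearMap ∘ₗ η.toLinearMap) where
  counit x := by
    rw [comp_apply, ← rTensor_comp_apply, show groupCounit K G ∘ₗ Φ.toAlgHom.toLinearMap =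
      Coalgebra.counit from LinearMap.ext Φ.counit_comp]
    exact hcoact.1 x
  coassoc x := by
    rw [comp_apply, ← rTensor_comp_apply, show groupComul K G ∘ₗ Φ.toAlgHom.toLinearMap =
      map Φ.toAlgHom.toLinearMap Φ.toAlgHom.toLinearMap ∘ₗ Coalgebra.comul
      from LinearMap.ext Φ.comul_comp]
    exact hcoact.rTensor_map_comul Φ.toAlgHom x

variable [DecidableEq G]

theorem isLieGrading_lieGrade : IsLieGrading K G g (lieGrade η Φ.toAlgHom) :=
  ⟨(Φ.isGroupCoaction hcoact).isInternal_coactionGrade,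
    fun _ _ _ hx _ hy => lie_mem_coactionGrade (Φ.toAlgHom.rTensorLieHom.comp η) hx hy⟩

theorem eq_of_lieGrade_eq (huniv : IsUniversalLiePair K g g B η)
    {Φ' : BialgHomToGroupAlgebra K G B}
    (h : ∀ σ, lieGrade η Φ.toAlgHom σ = lieGrade η Φ'.toAlgHom σ) : Φ = Φ' :=
  toAlgHom_injective <| huniv.algHom_ext fun x =>
    congr($(eq_of_coactionGrade_eq (Φ.isGroupCoaction hcoact).isInternal_coactionGrade
      (funext h)) x)

end BialgHomToGroupAlgebra

section GradedAlgHom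

variable {G : Type u} [CommGroup G] [DecidableEq G] {gr : G → Submodule K g}
  [DirectSum.Decomposition gr] {Φ : B →ₐ[K] MonoidAlgebra K G}

lemma lift_one_comp_eq_counitAlgHom (hcoact : IsLieCoaction K g B η)
    (huniv : IsUniversalLiePair K g g B η)
    (hΦ : ∀ x, rTensor g Φ.toLinearMap (η x) = gradedCoaction gr (MonoidAlgebra.of K G) x) :
    (MonoidAlgebra.lift K K G 1).comp Φ = Bialgebra.counitAlgHom K B :=
  huniv.algHom_ext fun x => by
    rw [AlgHom.comp_toLinearMap, rTensor_comp_apply, hΦ, ← comp_apply,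
      rTensor_lift_comp_gradedCoaction, gradedCoaction_one, Bialgebra.toLinearMap_counitAlgHom,
      LinearEquiv.coe_coe, LinearEquiv.symm_apply_eq]
    exact (hcoact.1 x).symm

lemma lift_diag_comp_eq_map_comp_comulAlgHom (hcoact : IsLieCoaction K g B η)
    (huniv : IsUniversalLiePair K g g B η)
    (hΦ : ∀ x, rTensor g Φ.toLinearMap (η x) = gradedCoaction gr (MonoidAlgebra.of K G) x) :
    (MonoidAlgebra.lift K _ G (diagMonoidHom K G)).comp Φ =
      (Algebra.TensorProduct.map Φ Φ).comp (Bialgebra.comulAlgHom K B) :=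
  huniv.algHom_ext fun x => calc
    rTensor g ((MonoidAlgebra.lift K _ G (diagMonoidHom K G)).comp Φ).toLinearMap (η x)
        = gradedCoaction gr (diagMonoidHom K G) x := by
      rw [AlgHom.comp_toLinearMap, rTensor_comp_apply, hΦ, ← comp_apply,
        rTensor_lift_comp_gradedCoaction]
    _ = (TensorProduct.assoc K _ _ g).symm (lTensor _ (gradedCoaction gr (MonoidAlgebra.of K G))
          (gradedCoaction gr (MonoidAlgebra.of K G) x)) :=
      congr($(assoc_symm_comp_lTensor_gradedCoaction gr _ _ fun _ => rfl) x).symm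
    _ = rTensor g (map Φ.toLinearMap Φ.toLinearMap ∘ₗ Coalgebra.comul) (η x) := by
      rw [hcoact.rTensor_map_comul, hΦ,
        (LinearMap.ext hΦ : rTensor g Φ.toLinearMap ∘ₗ η.toLinearMap = _)]
    _ = rTensor g ((Algebra.TensorProduct.map Φ Φ).comp (Bialgebra.comulAlgHom K B)).toLinearMap
          (η x) := rfl

end GradedAlgHom

theorem exists_bialgHomToGroupAlgebra_lieGrade_eq {G : Type u} [CommGroup G] [DecidableEq G]
    (hcoact : IsLieCoaction K g B η) (huniv : IsUniversalLiePair K g g B η)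
    {gr : G → Submodule K g} (hgr : IsLieGrading K G g gr) :
    ∃ Φ : BialgHomToGroupAlgebra K G B, ∀ σ, lieGrade η Φ.toAlgHom σ = gr σ := by
  let := hgr.1.chooseDecomposition
  obtain ⟨Φ, hΦ, -⟩ := huniv _ (gradedLieCoaction gr (MonoidAlgebra.of K G) hgr.2)
  replace hΦ x : rTensor g Φ.toLinearMap (η x) = gradedCoaction gr (MonoidAlgebra.of K G) x :=
    (hΦ x).symm
  refine ⟨⟨Φ, fun b => congr($(lift_one_comp_eq_counitAlgHom hcoact huniv hΦ) b),
    fun b => congr($(lift_diag_comp_eq_map_comp_comulAlgHom hcoact huniv hΦ) b)⟩, fun σ => ?_⟩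
  change coactionGrade (rTensor g Φ.toLinearMap ∘ₗ η.toLinearMap) σ = gr σ
  rw [(LinearMap.ext hΦ : rTensor g Φ.toLinearMap ∘ₗ η.toLinearMap = _),
    coactionGrade_gradedCoaction]

end Bialgebra

theorem lieGrade_bijective_onto_gradings_general
    (K : Type u) [Field K]
    (G : Type u) [CommGroup G] [DecidableEq G]
    (g : Type u) [LieRing g] [LieAlgebra K g]
    (B : Type u) [CommRing B] [Bialgebra K B]
    (η : g →ₗ⁅K⁆ B ⊗[K] g)
    (hcoact : IsLieCoaction K g B η)
    (huniv : IsUniversalLiePair K g g B η) :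
    -- each `Φ` gives a `G`-grading of the Lie algebra `g`
    (∀ Φ : BialgHomToGroupAlgebra K G B, IsLieGrading K G g (lieGrade η Φ.toAlgHom)) ∧
    -- the assignment is injective
    (∀ Φ Φ' : BialgHomToGroupAlgebra K G B,
      (∀ σ : G, lieGrade η Φ.toAlgHom σ = lieGrade η Φ'.toAlgHom σ) → Φ = Φ') ∧
    -- the assignment is surjective onto the `G`-gradings of `g`
    (∀ gr : G → Submodule K g, IsLieGrading K G g gr →
      ∃ Φ : BialgHomToGroupAlgebra K G B, ∀ σ : G, lieGrade η Φ.toAlgHom σ = gr σ) :=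
  ⟨fun Φ => Φ.isLieGrading_lieGrade hcoact,
    fun Φ _ h => Φ.eq_of_lieGrade_eq hcoact huniv h,
    fun _ hgr => exists_bialgHomToGroupAlgebra_lieGrade_eq hcoact huniv hgr⟩

theorem lieGrade_bijective_onto_gradings
    (K : Type u) [Field K] [CharZero K]
    (G : Type u) [CommGroup G] [DecidableEq G]
    (g : Type u) [LieRing g] [LieAlgebra K g] [FiniteDimensional K g]
    (B : Type u) [CommRing B] [Bialgebra K B]
    (η : g →ₗ⁅K⁆ B ⊗[K] g)
    (hcoact : IsLieCoaction K g B η)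
    (huniv : IsUniversalLiePair K g g B η) :
    -- each `Φ` gives a `G`-grading of the Lie algebra `g`
    (∀ Φ : BialgHomToGroupAlgebra K G B, IsLieGrading K G g (lieGrade η Φ.toAlgHom)) ∧
    -- the assignment is injective
    (∀ Φ Φ' : BialgHomToGroupAlgebra K G B,
      (∀ σ : G, lieGrade η Φ.toAlgHom σ = lieGrade η Φ'.toAlgHom σ) → Φ = Φ') ∧
    -- the assignment is surjective onto the `G`-gradings of `g`
    (∀ gr : G → Submodule K g, IsLieGrading K G g gr →
      ∃ Φ : BialgHomToGroupAlgebra K G B, ∀ σ : G, lieGrade η Φ.toAlgHom σ = gr σ) :=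
  lieGrade_bijective_onto_gradings_general K G g B η hcoact huniv
end

section
/- Let K be a field of characteristic zero and let A be a finite-dimensional non-unital associative K-algebra. Then for every non-unital associative K-algebra B there exists a universal pair for (A, B): a commutative K-algebra C₀ together with a non-unital algebra homomorphism η : B → A ⊗ C₀ such that for every commutative K-algebra C and every non-unital algebra homomorphism f : B → A ⊗ C there exists a unique K-algebra homomorphism Φ : C₀ → C with f = (id_A ⊗ Φ) ∘ η. (Equivalently, the functor A ⊗ − : ComAlg_K → Alg_K admits a left adjoint.) -/
/-!
Fix a basis `e₁, …, eₙ` of `A`. Since an element of `A ⊗ C` is the same as its `n` coordinates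
in `C`, the generic element `x ↦ ∑ᵢ eᵢ ⊗ X_{x,i}` over the polynomial ring
`K[X_{x,i} | x ∈ B, 1 ≤ i ≤ n]` is the universal map of *sets* `B → A ⊗ C`. It becomes an algebra
homomorphism exactly modulo the ideal expressing additivity, `K`-linearity and multiplicativity
coordinatewise, so the quotient by that ideal, with the image of the generic element, is the
universal pair.
-/

open TensorProduct

universe u

/-- `(C₀, η)` is a universal pair for `(A, B)`: for every commutative `K`-algebra `C` and
every non-unital algebra homomorphism `f : B → A ⊗ C` there is a unique `K`-algebra
homomorphism `Φ : C₀ → C` with `f = (id_A ⊗ Φ) ∘ η`. -/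
def IsUniversalAlgPair (K : Type u) [Field K]
    (A : Type u) [NonUnitalRing A] [Module K A] [SMulCommClass K A A] [IsScalarTower K A A]
    (B : Type u) [NonUnitalRing B] [Module K B] [SMulCommClass K B B] [IsScalarTower K B B]
    (C₀ : Type u) [CommRing C₀] [Algebra K C₀]
    (η : B →ₙₐ[K] A ⊗[K] C₀) : Prop :=
  ∀ (C : Type u) [CommRing C] [Algebra K C], ∀ f : B →ₙₐ[K] A ⊗[K] C,
    ∃! Φ : C₀ →ₐ[K] C, ∀ x : B, f x = LinearMap.lTensor A Φ.toLinearMap (η x)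

/-- A universal pair for `(A, B)`: a commutative `K`-algebra `C₀` together with a non-unital
algebra homomorphism `η : B → A ⊗ C₀` satisfying the universal property. -/
structure UniversalAlgPair (K : Type u) [Field K]
    (A : Type u) [NonUnitalRing A] [Module K A] [SMulCommClass K A A] [IsScalarTower K A A]
    (B : Type u) [NonUnitalRing B] [Module K B] [SMulCommClass K B B] [IsScalarTower K B B] :
    Type (u + 1) where
  C₀ : Type u
  [commRingC₀ : CommRing C₀]
  [algebraC₀ : Algebra K C₀]
  η : B →ₙₐ[K] A ⊗[K] C₀
  universal : IsUniversalAlgPair K A B C₀ η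

open MvPolynomial

section TensorCoordinates

variable {R M N P : Type*} [CommSemiring R] [AddCommMonoid M] [Module R M]
  [AddCommMonoid N] [Module R N] [AddCommMonoid P] [Module R P]
  {ι : Type*} [Fintype ι] (b : Module.Basis ι R M)

namespace TensorProduct

noncomputable def equivFunOfBasisLeft : M ⊗[R] N ≃ₗ[R] (ι → N) :=
  haveI := Classical.decEq ι
  equivFinsuppOfBasisLeft b ≪≫ₗ Finsupp.linearEquivFunOnFinite R N ι

@[simp]
lemma equivFunOfBasisLeft_symm_apply (c : ι → N) :
    (equivFunOfBasisLeft b).symm c = ∑ i, b i ⊗ₜ c i := by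
  classical
  simp [equivFunOfBasisLeft, Finsupp.sum_fintype]

end TensorProduct

lemma LinearMap.lTensor_equivFunOfBasisLeft_symm (φ : N →ₗ[R] P) (c : ι → N) :
    lTensor M φ ((equivFunOfBasisLeft b).symm c) = (equivFunOfBasisLeft b).symm (φ ∘ c) := by
  simp [map_sum]

lemma TensorProduct.equivFunOfBasisLeft_lTensor (φ : N →ₗ[R] P) (x : M ⊗[R] N) (i : ι) :
    equivFunOfBasisLeft b (LinearMap.lTensor M φ x) i = φ (equivFunOfBasisLeft b x i) := by
  rw [← (equivFunOfBasisLeft b).symm_apply_apply x, LinearMap.lTensor_equivFunOfBasisLeft_symm]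
  simp only [LinearEquiv.apply_symm_apply, Function.comp_apply]

end TensorCoordinates

lemma LinearMap.lTensor_algHom_mul {R A S T : Type*} [CommSemiring R]
    [NonUnitalNonAssocSemiring A] [Module R A] [SMulCommClass R A A] [IsScalarTower R A A]
    [Semiring S] [Algebra R S] [Semiring T] [Algebra R T] (φ : S →ₐ[R] T) (x y : A ⊗[R] S) :
    lTensor A φ.toLinearMap (x * y) = lTensor A φ.toLinearMap x * lTensor A φ.toLinearMap y := by
  induction x using TensorProduct.induction_on with
  | zero => simp
  | add x₁ x₂ h₁ h₂ => simp only [add_mul, map_add, h₁, h₂]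
  | tmul a s =>
    induction y using TensorProduct.induction_on with
    | zero => simp
    | add y₁ y₂ h₁ h₂ => simp only [mul_add, map_add, h₁, h₂]
    | tmul a' s' => simp

namespace UniversalAlgPair

section Construction

variable {K A : Type*} [CommRing K] {ι : Type*} [Fintype ι] {R : Type*} [CommRing R] [Algebra K R]

section Generic

variable [AddCommMonoid A] [Module K A] (b : Module.Basis ι K A) {B : Type*}

noncomputable def genericTensor (x : B) : A ⊗[K] MvPolynomial (B × ι) K :=
  (equivFunOfBasisLeft b).symm fun i ↦ X (x, i)

lemma lTensor_genericTensor (φ : MvPolynomial (B × ι) K →ₐ[K] R) (x : B) :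
    LinearMap.lTensor A φ.toLinearMap (genericTensor b x) =
      (equivFunOfBasisLeft b).symm fun i ↦ φ (X (x, i)) :=
  LinearMap.lTensor_equivFunOfBasisLeft_symm b _ _

noncomputable def liftGeneric (g : B → A ⊗[K] R) : MvPolynomial (B × ι) K →ₐ[K] R :=
  aeval fun p ↦ equivFunOfBasisLeft b (g p.1) p.2

lemma liftGeneric_X (g : B → A ⊗[K] R) (x : B) (i : ι) :
    liftGeneric b g (X (x, i)) = equivFunOfBasisLeft b (g x) i :=
  aeval_X _ _

lemma lTensor_liftGeneric_genericTensor (g : B → A ⊗[K] R) (x : B) :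
    LinearMap.lTensor A (liftGeneric b g).toLinearMap (genericTensor b x) = g x := by
  simp [lTensor_genericTensor, liftGeneric_X]

lemma algHom_ext_genericTensor {φ ψ : MvPolynomial (B × ι) K →ₐ[K] R}
    (h : ∀ x, LinearMap.lTensor A φ.toLinearMap (genericTensor b x) =
      LinearMap.lTensor A ψ.toLinearMap (genericTensor b x)) : φ = ψ :=
  MvPolynomial.algHom_ext fun ⟨x, i⟩ ↦ congrFun ((equivFunOfBasisLeft b).symm.injective
    (by simpa only [lTensor_genericTensor] using h x)) i

end Generic

section Relations

variable [NonUnitalNonAssocSemiring A] [Module K A] [SMulCommClass K A A] [IsScalarTower K A A]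
  (b : Module.Basis ι K A) (B : Type*) [NonUnitalNonAssocSemiring B] [Module K B]

noncomputable def relations : Set (MvPolynomial (B × ι) K) :=
  (Set.range fun ((x, y, i) : B × B × ι) ↦ X (x + y, i) - X (x, i) - X (y, i)) ∪
  (Set.range fun ((k, x, i) : K × B × ι) ↦ X (k • x, i) - C k * X (x, i)) ∪
  Set.range fun ((x, y, i) : B × B × ι) ↦
    X (x * y, i) - equivFunOfBasisLeft b (genericTensor b x * genericTensor b y) i

noncomputable def relationIdeal : Ideal (MvPolynomial (B × ι) K) :=
  Ideal.span (relations b B)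

lemma forall_relationIdeal_map_eq_zero_iff (φ : MvPolynomial (B × ι) K →ₐ[K] R) :
    (∀ p ∈ relationIdeal b B, φ p = 0) ↔
      (∀ x y i, φ (X (x + y, i)) = φ (X (x, i)) + φ (X (y, i))) ∧
      (∀ (k : K) (x : B) (i : ι), φ (X (k • x, i)) = k • φ (X (x, i))) ∧
      ∀ x y i, φ (X (x * y, i)) =
        φ (equivFunOfBasisLeft b (genericTensor b x * genericTensor b y) i) := by
  change relationIdeal b B ≤ RingHom.ker φ ↔ _
  simp [relationIdeal, relations, Ideal.span_le, Set.range_subset_iff,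
    sub_eq_zero, sub_sub, Algebra.smul_def, and_assoc]

variable {b B}

noncomputable def genericHom (φ : MvPolynomial (B × ι) K →ₐ[K] R)
    (hφ : ∀ p ∈ relationIdeal b B, φ p = 0) : B →ₙₐ[K] A ⊗[K] R :=
  have hX := (forall_relationIdeal_map_eq_zero_iff b B φ).1 hφ
  { toFun x := LinearMap.lTensor A φ.toLinearMap (genericTensor b x)
    map_add' x y := by
      simp only [lTensor_genericTensor, ← map_add]
      exact congrArg _ (funext (hX.1 x y))
    map_smul' k x := by
      simp only [lTensor_genericTensor, ← map_smul]
      exact congrArg _ (funext (hX.2.1 k x))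
    map_zero' := by
      have hX_zero (i : ι) : φ (X (0, i)) = 0 := by simpa using hX.2.1 0 0 i
      simp [lTensor_genericTensor, hX_zero]
    map_mul' x y := by
      rw [← LinearMap.lTensor_algHom_mul, ← (equivFunOfBasisLeft b).symm_apply_apply
        (LinearMap.lTensor _ _ (_ * _)), lTensor_genericTensor]
      congr 1
      ext i
      rw [equivFunOfBasisLeft_lTensor, hX.2.2, AlgHom.toLinearMap_apply] }

lemma liftGeneric_eq_zero_of_mem_relationIdeal (f : B →ₙₐ[K] A ⊗[K] R) :
    ∀ p ∈ relationIdeal b B, liftGeneric b f p = 0 := by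
  refine (forall_relationIdeal_map_eq_zero_iff b B _).2
    ⟨fun x y i ↦ ?_, fun k x i ↦ ?_, fun x y i ↦ ?_⟩
  · simp [liftGeneric_X]
  · simp [liftGeneric_X]
  · rw [eq_comm, ← AlgHom.toLinearMap_apply, ← equivFunOfBasisLeft_lTensor,
      LinearMap.lTensor_algHom_mul, lTensor_liftGeneric_genericTensor,
      lTensor_liftGeneric_genericTensor, liftGeneric_X, map_mul f]

variable (b B)

noncomputable def universalHom :
    B →ₙₐ[K] A ⊗[K] (MvPolynomial (B × ι) K ⧸ relationIdeal b B) :=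
  genericHom (Ideal.Quotient.mkₐ K _) fun _ ↦ Ideal.Quotient.eq_zero_iff_mem.2

lemma universalHom_apply (x : B) :
    universalHom b B x =
      LinearMap.lTensor A (Ideal.Quotient.mkₐ K (relationIdeal b B)).toLinearMap
        (genericTensor b x) :=
  rfl

end Relations

end Construction

variable {K A ι : Type u} [Field K] [NonUnitalRing A] [Module K A] [SMulCommClass K A A]
  [IsScalarTower K A A] [Fintype ι] (b : Module.Basis ι K A)
  (B : Type u) [NonUnitalRing B] [Module K B] [SMulCommClass K B B] [IsScalarTower K B B]

theorem isUniversalAlgPair_universalHom :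
    IsUniversalAlgPair K A B (MvPolynomial (B × ι) K ⧸ relationIdeal b B) (universalHom b B) := by
  intro C _ _ f
  refine ⟨Ideal.Quotient.liftₐ (relationIdeal b B) (liftGeneric b f)
      (liftGeneric_eq_zero_of_mem_relationIdeal f),
    fun x ↦ ?_, fun Ψ hΨ ↦ Ideal.Quotient.algHom_ext _ ?_⟩
  · rw [universalHom_apply, ← LinearMap.lTensor_comp_apply, ← AlgHom.comp_toLinearMap,
      Ideal.Quotient.liftₐ_comp, lTensor_liftGeneric_genericTensor]
  · rw [Ideal.Quotient.liftₐ_comp]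
    refine algHom_ext_genericTensor b fun x ↦ ?_
    rw [lTensor_liftGeneric_genericTensor, hΨ x, universalHom_apply, AlgHom.comp_toLinearMap,
      LinearMap.lTensor_comp_apply]

noncomputable def ofBasis : UniversalAlgPair K A B :=
  ⟨_, _, isUniversalAlgPair_universalHom b B⟩

end UniversalAlgPair

theorem exists_universalAlgPair_of_finiteDimensional_general
    (K : Type u) [Field K]
    (A : Type u) [NonUnitalRing A] [Module K A] [SMulCommClass K A A] [IsScalarTower K A A]
    [FiniteDimensional K A]
    (B : Type u) [NonUnitalRing B] [Module K B] [SMulCommClass K B B] [IsScalarTower K B B] :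
    Nonempty (UniversalAlgPair K A B) :=
  ⟨.ofBasis (Module.Free.chooseBasis K A) B⟩

/-- If `A` is a finite-dimensional non-unital associative algebra over a field `K` of
characteristic zero, then for every non-unital associative `K`-algebra `B` there exists a
universal pair for `(A, B)`. -/
theorem exists_universalAlgPair_of_finiteDimensional
    (K : Type u) [Field K] [CharZero K]
    (A : Type u) [NonUnitalRing A] [Module K A] [SMulCommClass K A A] [IsScalarTower K A A]
    [FiniteDimensional K A]
    (B : Type u) [NonUnitalRing B] [Module K B] [SMulCommClass K B B] [IsScalarTower K B B] :
    Nonempty (UniversalAlgPair K A B) :=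
  exists_universalAlgPair_of_finiteDimensional_general K A B
end

section
/- Let K be a field of characteristic zero and let A be a non-unital associative K-algebra. If for every non-unital associative K-algebra B there exists a universal pair for (A, B) (equivalently, if the functor A ⊗ − : ComAlg_K → Alg_K admits a left adjoint), then A is finite-dimensional over K. -/
/-!
Take for `B` the free non-unital algebra on one generator `X`, realised as the polynomials
without constant term, and let `(C₀, η)` be a universal pair for `(A, B)`. For every `a : A`
the evaluation `X ↦ a ⊗ 1` is a homomorphism `B → A ⊗ K`, so it factors through a character
`Φ : C₀ → K`, giving `a = (id ⊗ Φ) (η X)`. Writing the single tensor `η X` as a finite sum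
`∑ aⱼ ⊗ cⱼ` shows that every `a` lies in the span of the finitely many `aⱼ`.
-/

open TensorProduct

universe u

namespace TensorProduct

variable {R M N : Type*} [CommSemiring R] [AddCommMonoid M] [Module R M] [AddCommMonoid N]
  [Module R N]

theorem exists_fg_forall_rid_lTensor_mem (t : M ⊗[R] N) :
    ∃ W : Submodule R M, W.FG ∧ ∀ φ : N →ₗ[R] R, TensorProduct.rid R M (φ.lTensor M t) ∈ W := by
  induction t using TensorProduct.induction_on with
  | zero => exact ⟨⊥, Submodule.fg_bot, fun φ => by simp⟩
  | tmul m n =>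
    refine ⟨R ∙ m, Submodule.fg_span_singleton m, fun φ => ?_⟩
    simpa using Submodule.smul_mem _ (φ n) (Submodule.mem_span_singleton_self m)
  | add t₁ t₂ ih₁ ih₂ =>
    obtain ⟨W₁, hW₁, h₁⟩ := ih₁
    obtain ⟨W₂, hW₂, h₂⟩ := ih₂
    exact ⟨W₁ ⊔ W₂, hW₁.sup hW₂, fun φ => by
      simpa using Submodule.add_mem_sup (h₁ φ) (h₂ φ)⟩

end TensorProduct

namespace Polynomial

variable (R : Type*) [CommRing R]

/-- The free non-unital `R`-algebra on `X`. -/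
def augmentationSubalgebra : NonUnitalSubalgebra R R[X] where
  carrier := {p | p.coeff 0 = 0}
  add_mem' ha hb := by simp_all
  zero_mem' := coeff_zero 0
  mul_mem' ha hb := by simp_all [mul_coeff_zero]
  smul_mem' c _ ha := by simp_all

noncomputable def augmentationSubalgebra.X : augmentationSubalgebra R :=
  ⟨Polynomial.X, coeff_X_zero⟩

variable {R} {M : Type*} [NonUnitalRing M] [Module R M] [SMulCommClass R M M]
  [IsScalarTower R M M]

theorem fst_aeval_inr (m : M) (p : R[X]) :
    (aeval (Unitization.inr m : Unitization R M) p).fst = p.coeff 0 := by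
  have h := aeval_algHom_apply (Unitization.fstHom R M) (Unitization.inr m) p
  rw [Unitization.fstHom_apply, Unitization.fstHom_apply, Unitization.fst_inr,
    ← coeff_zero_eq_aeval_zero] at h
  exact h.symm

/-- Evaluation at `m`, computed in the unitization of `M`: the scalar part of the value is the
constant term, which vanishes. -/
noncomputable def nonUnitalAeval (m : M) : augmentationSubalgebra R →ₙₐ[R] M where
  toFun p := (aeval (Unitization.inr m : Unitization R M) (p : R[X])).snd
  map_add' p q := by simp
  map_smul' c p := by simp
  map_zero' := by simp
  map_mul' p q := by
    have hp : (p : R[X]).coeff 0 = 0 := p.2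
    have hq : (q : R[X]).coeff 0 = 0 := q.2
    simp [Unitization.snd_mul, fst_aeval_inr, hp, hq]

@[simp]
theorem nonUnitalAeval_X (m : M) : nonUnitalAeval m (augmentationSubalgebra.X R) = m := by
  simp [nonUnitalAeval, augmentationSubalgebra.X]

end Polynomial

theorem finiteDimensional_of_forall_exists_universalAlgPair_general
    (K : Type u) [Field K]
    (A : Type u) [NonUnitalRing A] [Module K A] [SMulCommClass K A A] [IsScalarTower K A A]
    (huniv : ∀ (B : Type u) [NonUnitalRing B] [Module K B] [SMulCommClass K B B]
      [IsScalarTower K B B], Nonempty (UniversalAlgPair K A B)) :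
    FiniteDimensional K A := by
  obtain ⟨P⟩ := huniv (Polynomial.augmentationSubalgebra K)
  let := P.commRingC₀
  let := P.algebraC₀
  obtain ⟨W, hW, hmem⟩ :=
    TensorProduct.exists_fg_forall_rid_lTensor_mem (P.η (Polynomial.augmentationSubalgebra.X K))
  have hW_top : W = ⊤ := by
    refine eq_top_iff.mpr fun a _ => ?_
    obtain ⟨Φ, hΦ, -⟩ := P.universal K (Polynomial.nonUnitalAeval (a ⊗ₜ[K] (1 : K)))
    simpa [← hΦ] using hmem Φ.toLinearMap
  exact ⟨hW_top ▸ hW⟩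

/-- If every non-unital associative `K`-algebra `B` admits a universal pair for `(A, B)`,
then `A` is finite-dimensional over `K`. -/
theorem finiteDimensional_of_forall_exists_universalAlgPair
    (K : Type u) [Field K] [CharZero K]
    (A : Type u) [NonUnitalRing A] [Module K A] [SMulCommClass K A A] [IsScalarTower K A A]
    (huniv : ∀ (B : Type u) [NonUnitalRing B] [Module K B] [SMulCommClass K B B]
      [IsScalarTower K B B], Nonempty (UniversalAlgPair K A B)) :
    FiniteDimensional K A :=
  finiteDimensional_of_forall_exists_universalAlgPair_general K A huniv
end
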